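/- arXiv:2310.10990 — 5 statements merged into one kernel-verified Lean document; each statement's English description precedes it below -/
import Mathlib

section
/- Let E be a finite-dimensional real inner product space, L : E → E a self-adjoint positive semidefinite continuous linear map, δ > 0 and k ≥ 1 an integer. Then the operator norm of φ_k(−δ L) satisfies ‖φ_k(−δ L)‖ ≤ 1/k!. -/
open scoped RealInnerProductSpace

/-- The `φ`-functions of exponential integrators:
`φ₀ N = exp N` and `φ_k N = ∫_0^1 (θ^(k-1)/(k-1)!) • exp ((1-θ) N) dθ` for `k ≥ 1`. -/
noncomputable def phiFun {A : Type*} [NormedRing A] [NormedAlgebra ℝ A]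
    (k : ℕ) (N : A) : A :=
  if k = 0 then NormedSpace.exp N
  else ∫ θ in (0:ℝ)..1,
    (θ ^ (k - 1) / (Nat.factorial (k - 1) : ℝ)) • NormedSpace.exp ((1 - θ) • N)

lemma exp_smul_opNorm_le_one
    {E : Type*} [NormedAddCommGroup E] [InnerProductSpace ℝ E] [FiniteDimensional ℝ E]
    (N : E →L[ℝ] E) (hN : ∀ x : E, ⟪N x, x⟫ ≤ 0) {s : ℝ} (hs : 0 ≤ s) :
    ‖NormedSpace.exp (s • N)‖ ≤ 1 := by
  refine ContinuousLinearMap.opNorm_le_bound _ zero_le_one fun x => ?_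
  rw [one_mul]
  set u : ℝ → E := fun t => (NormedSpace.exp (t • N)) x with hu_def
  have hu : ∀ t : ℝ, HasDerivAt u (N (u t)) t := by
    intro t
    have h1 := hasDerivAt_exp_smul_const' (𝕂 := ℝ) N t
    have h2 := h1.clm_apply (hasDerivAt_const t x)
    simpa [u, ContinuousLinearMap.mul_apply] using h2
  set h : ℝ → ℝ := fun t => ⟪u t, u t⟫ with hh_def
  have hh : ∀ t : ℝ, HasDerivAt h (2 * ⟪N (u t), u t⟫) t := by
    intro t
    have := (hu t).inner ℝ (hu t)
    have e : ⟪u t, N (u t)⟫ + ⟪N (u t), u t⟫ = 2 * ⟪N (u t), u t⟫ := by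
      rw [real_inner_comm (u t)]; ring
    rw [e] at this
    exact this
  have hanti : Antitone h := by
    refine antitone_of_deriv_nonpos (fun t => (hh t).differentiableAt) fun t => ?_
    rw [(hh t).deriv]
    have := hN (u t)
    linarith
  have h0 : h 0 = ‖x‖ ^ 2 := by
    simp [hh_def, hu_def, real_inner_self_eq_norm_sq]
  have hle : h s ≤ ‖x‖ ^ 2 := h0 ▸ hanti hs
  have hsq : ‖u s‖ ^ 2 ≤ ‖x‖ ^ 2 := by
    rw [← real_inner_self_eq_norm_sq]; exact hle
  nlinarith [norm_nonneg (u s), norm_nonneg x]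

/-- If `L` is a self-adjoint positive semidefinite operator on a finite-dimensional real
inner product space, `δ > 0` and `k ≥ 1`, then `‖φ_k (-δ L)‖ ≤ 1 / k!`. -/
theorem phiFun_opNorm_le
    {E : Type*} [NormedAddCommGroup E] [InnerProductSpace ℝ E] [FiniteDimensional ℝ E]
    (L : E →L[ℝ] E) (hsym : ∀ x y : E, ⟪L x, y⟫ = ⟪x, L y⟫)
    (hpsd : ∀ x : E, 0 ≤ ⟪L x, x⟫)
    (δ : ℝ) (hδ : 0 < δ) (k : ℕ) (hk : 1 ≤ k) :
    ‖phiFun k ((-δ) • L)‖ ≤ 1 / (Nat.factorial k : ℝ) := by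
  have hk0 : k ≠ 0 := by omega
  rw [phiFun, if_neg hk0]
  set N : E →L[ℝ] E := (-δ) • L with hN_def
  have hN : ∀ x : E, ⟪N x, x⟫ ≤ 0 := by
    intro x
    simp only [hN_def, ContinuousLinearMap.smul_apply, inner_smul_left, conj_trivial]
    have := hpsd x
    nlinarith
  have hbound : ∀ θ ∈ Set.Icc (0:ℝ) 1,
      ‖(θ ^ (k - 1) / (Nat.factorial (k - 1) : ℝ)) • NormedSpace.exp ((1 - θ) • N)‖
        ≤ θ ^ (k - 1) / (Nat.factorial (k - 1) : ℝ) := by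
    intro θ hθ
    have hc : 0 ≤ θ ^ (k - 1) / (Nat.factorial (k - 1) : ℝ) :=
      div_nonneg (pow_nonneg hθ.1 _) (Nat.cast_nonneg _)
    calc ‖(θ ^ (k - 1) / (Nat.factorial (k - 1) : ℝ)) • NormedSpace.exp ((1 - θ) • N)‖
        ≤ ‖θ ^ (k - 1) / (Nat.factorial (k - 1) : ℝ)‖ * ‖NormedSpace.exp ((1 - θ) • N)‖ :=
          ContinuousLinearMap.opNorm_smul_le _ _
      _ = θ ^ (k - 1) / (Nat.factorial (k - 1) : ℝ) * ‖NormedSpace.exp ((1 - θ) • N)‖ := by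
          rw [Real.norm_eq_abs, abs_of_nonneg hc]
      _ ≤ θ ^ (k - 1) / (Nat.factorial (k - 1) : ℝ) * 1 :=
          mul_le_mul_of_nonneg_left (exp_smul_opNorm_le_one N hN (by linarith [hθ.2])) hc
      _ = _ := mul_one _
  letI : NormedAlgebra ℚ (E →L[ℝ] E) := NormedAlgebra.restrictScalars ℚ ℝ (E →L[ℝ] E)
  have hcont : Continuous fun θ : ℝ =>
      (θ ^ (k - 1) / (Nat.factorial (k - 1) : ℝ)) • NormedSpace.exp ((1 - θ) • N) :=
    Continuous.smul (by fun_prop : Continuous fun θ : ℝ => θ ^ (k - 1) / (Nat.factorial (k - 1) : ℝ))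
      (NormedSpace.exp_continuous.comp (by fun_prop : Continuous fun θ : ℝ => (1 - θ) • N))
  calc ‖∫ θ in (0:ℝ)..1,
        (θ ^ (k - 1) / (Nat.factorial (k - 1) : ℝ)) • NormedSpace.exp ((1 - θ) • N)‖
      ≤ ∫ θ in (0:ℝ)..1,
        ‖(θ ^ (k - 1) / (Nat.factorial (k - 1) : ℝ)) • NormedSpace.exp ((1 - θ) • N)‖ :=
        intervalIntegral.norm_integral_le_integral_norm zero_le_one
    _ ≤ ∫ θ in (0:ℝ)..1, θ ^ (k - 1) / (Nat.factorial (k - 1) : ℝ) := by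
        refine intervalIntegral.integral_mono_on zero_le_one ?_ ?_ hbound
        · exact (hcont.norm).intervalIntegrable _ _
        · exact Continuous.intervalIntegrable (by fun_prop) _ _
    _ = 1 / (Nat.factorial k : ℝ) := by
        rw [intervalIntegral.integral_div, integral_pow]
        have hkk : k = (k - 1) + 1 := by omega
        rw [hkk, Nat.factorial_succ]
        push_cast
        rw [one_pow, zero_pow (by omega)]
        have h1 : (0:ℝ) < ((k-1:ℕ):ℝ) + 1 := by positivity
        have h2 : (0:ℝ) < (Nat.factorial (k-1) : ℝ) := by positivity
        field_simp
        norm_num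
end

section
/- Let A be an n×n real symmetric positive semidefinite matrix and let δ > 0. Then the ℓ²-operator norm of the matrix √A · ∫_0^δ exp(−(δ − s) A) ds is at most √δ, where √A denotes the positive semidefinite square root of A. -/
open scoped Matrix.Norms.L2Operator

/-- The positive semidefinite square root of a positive semidefinite matrix (as in the older
Mathlib, where `Matrix.PosSemidef.sqrt` was defined). -/
noncomputable def Matrix.PosSemidef.sqrt {n : Type*} [Fintype n] [DecidableEq n]
    {A : Matrix n n ℝ} (hA : A.PosSemidef) : Matrix n n ℝ :=
  hA.1.eigenvectorUnitary * Matrix.diagonal ((√·) ∘ hA.1.eigenvalues) *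
    (star hA.1.eigenvectorUnitary : Matrix n n ℝ)

open Matrix NormedSpace in
private lemma diag_norm_le' {n : ℕ} (v : Fin n → ℝ) {C : ℝ} (hC : 0 ≤ C)
    (h : ∀ i, |v i| ≤ C) : ‖Matrix.diagonal v‖ ≤ C := by
  rw [Matrix.l2_opNorm_def]
  refine ContinuousLinearMap.opNorm_le_bound _ hC fun x => ?_
  show ‖Matrix.toEuclideanLin (Matrix.diagonal v) x‖ ≤ _
  rw [Matrix.toEuclideanLin_apply, EuclideanSpace.norm_eq, EuclideanSpace.norm_eq]
  rw [← Real.sqrt_sq hC, ← Real.sqrt_mul (sq_nonneg C)]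
  apply Real.sqrt_le_sqrt
  rw [Finset.mul_sum]
  apply Finset.sum_le_sum
  intro i _
  simp only [Matrix.mulVec_diagonal, Real.norm_eq_abs, sq_abs]
  calc (v i * x i) ^ 2 = (v i)^2 * (x i)^2 := by ring
    _ ≤ C ^ 2 * (x i) ^ 2 := by
        apply mul_le_mul_of_nonneg_right _ (sq_nonneg _)
        rw [← sq_abs (v i)]
        exact pow_le_pow_left₀ (abs_nonneg _) (h i) 2

/-- If `A` is an `n×n` real symmetric positive semidefinite matrix and `δ > 0`, then the
ℓ²-operator norm of `√A * ∫_0^δ exp (-(δ - s) A) ds` is at most `√δ`, where `√A` is the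
positive semidefinite square root of `A`. -/
theorem sqrt_mul_integral_exp_opNorm_le
    {n : ℕ} {A : Matrix (Fin n) (Fin n) ℝ} (hA : A.PosSemidef) (δ : ℝ) (hδ : 0 < δ) :
    ‖hA.sqrt * ∫ s in (0:ℝ)..δ, NormedSpace.exp ((-(δ - s)) • A)‖ ≤ Real.sqrt δ := by
  open Matrix NormedSpace in
  set V : Matrix (Fin n) (Fin n) ℝ := ↑(hA.1.eigenvectorUnitary) with hV
  have hVmem : V ∈ unitary (Matrix (Fin n) (Fin n) ℝ) := hA.1.eigenvectorUnitary.2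
  set d := hA.1.eigenvalues with hd
  have hAdecomp : A = V * Matrix.diagonal d * star V := by
    simpa using hA.1.spectral_theorem
  let Φlin : (Fin n → ℝ) →ₗ[ℝ] Matrix (Fin n) (Fin n) ℝ :=
    { toFun := fun v => V * Matrix.diagonal v * star V
      map_add' := fun a b => by
        show V * Matrix.diagonal (a + b) * star V =
          V * Matrix.diagonal a * star V + V * Matrix.diagonal b * star V
        rw [show Matrix.diagonal (a + b) = Matrix.diagonal a + Matrix.diagonal b from by
          rw [show a + b = fun i => a i + b i from rfl, ← Matrix.diagonal_add],
          mul_add, add_mul]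
      map_smul' := fun c a => by
        show V * Matrix.diagonal (c • a) * star V = _
        simp [Matrix.diagonal_smul, mul_smul_comm, smul_mul_assoc] }
  let Φ := LinearMap.toContinuousLinearMap Φlin
  have hΦ : ∀ v, Φ v = V * Matrix.diagonal v * star V := fun _ => rfl
  have h1V : star V * V = 1 := (Unitary.mem_iff.mp hVmem).1
  have hVunit : IsUnit V := ⟨⟨V, star V, (Unitary.mem_iff.mp hVmem).2, h1V⟩, rfl⟩
  have hUinv : V⁻¹ = star V := Matrix.inv_eq_left_inv h1V
  -- the exponential diagonalizes
  have hexp : ∀ s : ℝ, exp ((-(δ - s)) • A) = Φ (fun i => Real.exp (-(δ - s) * d i)) := by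
    intro s
    have h1 : (-(δ - s)) • A = V * ((-(δ - s)) • Matrix.diagonal d) * star V := by
      rw [hAdecomp, mul_smul_comm, smul_mul_assoc]
    rw [h1, ← hUinv, Matrix.exp_conj _ _ hVunit, hUinv, hΦ]
    congr 1
    rw [← Matrix.diagonal_smul, Matrix.exp_diagonal]
    have : exp ((-(δ - s)) • d) = fun i => Real.exp (-(δ - s) * d i) := by
      funext i
      rw [Pi.coe_exp, Pi.smul_apply, smul_eq_mul, Real.exp_eq_exp_ℝ]
    rw [this]
  -- compute the integral
  set w : Fin n → ℝ := fun i => ∫ s in (0:ℝ)..δ, Real.exp (-(δ - s) * d i) with hw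
  have hgcont : Continuous fun s : ℝ => (fun i => Real.exp (-(δ - s) * d i)) := by
    fun_prop
  have hgint : IntervalIntegrable (fun s : ℝ => (fun i => Real.exp (-(δ - s) * d i)))
      MeasureTheory.volume 0 δ := hgcont.intervalIntegrable _ _
  have hI : (∫ s in (0:ℝ)..δ, exp ((-(δ - s)) • A)) = Φ w := by
    simp_rw [hexp]
    rw [Φ.intervalIntegral_comp_comm hgint]
    congr 1
    funext i
    have h := (ContinuousLinearMap.proj (R := ℝ) (φ := fun _ : Fin n => ℝ)
      i).intervalIntegral_comp_comm hgint
    exact h.symm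
  -- sqrt diagonalizes
  have hsqrt : hA.sqrt = Φ (fun i => Real.sqrt (d i)) := by
    rw [hΦ, Matrix.PosSemidef.sqrt]
    congr 1
  -- the product
  have hprod : hA.sqrt * ∫ s in (0:ℝ)..δ, exp ((-(δ - s)) • A)
      = Φ (fun i => Real.sqrt (d i) * w i) := by
    rw [hI, hsqrt, hΦ, hΦ, hΦ, ← Matrix.diagonal_mul_diagonal]
    simp only [mul_assoc]
    rw [← mul_assoc (star V) V, h1V, one_mul]
  -- norm reduction
  rw [hprod, hΦ, mul_assoc, CStarRing.norm_mem_unitary_mul _ hVmem,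
    CStarRing.norm_mul_mem_unitary _ (Unitary.star_mem hVmem)]
  -- entrywise bound
  refine diag_norm_le' _ (Real.sqrt_nonneg δ) fun i => ?_
  have hdi : 0 ≤ d i := hA.eigenvalues_nonneg i
  have hwnn : 0 ≤ w i :=
    intervalIntegral.integral_nonneg hδ.le fun s _ => (Real.exp_pos _).le
  have hsw : 0 ≤ Real.sqrt (d i) * w i := mul_nonneg (Real.sqrt_nonneg _) hwnn
  rw [abs_of_nonneg hsw]
  have hw1 : w i ≤ δ := by
    have hle : w i ≤ ∫ _ in (0:ℝ)..δ, (1:ℝ) := by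
      apply intervalIntegral.integral_mono_on hδ.le
        (Continuous.intervalIntegrable (by fun_prop) _ _) intervalIntegrable_const
      intro s hs
      have hns : -(δ - s) * d i ≤ 0 := mul_nonpos_of_nonpos_of_nonneg (by linarith [hs.2]) hdi
      exact Real.exp_le_one_iff.mpr hns
    simpa using hle
  rcases eq_or_lt_of_le hdi with h0 | hpos
  · rw [← h0]; simpa using Real.sqrt_nonneg δ
  · have hw2 : w i ≤ 1 / d i := by
      have hF : ∀ s : ℝ, HasDerivAt (fun t => Real.exp (-(δ - t) * d i) / d i)
          (Real.exp (-(δ - s) * d i)) s := by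
        intro s
        have h1 : HasDerivAt (fun t : ℝ => -(δ - t) * d i) (d i) s := by
          have h' : HasDerivAt (fun t : ℝ => -(δ - t)) 1 s := by
            simpa using (hasDerivAt_id s).sub_const δ
          simpa using h'.mul_const (d i)
        have h2 := (Real.hasDerivAt_exp _).comp s h1
        have h3 := h2.div_const (d i)
        simpa [mul_div_assoc, mul_div_cancel_right₀ _ (ne_of_gt hpos)] using h3
      have hcont : Continuous fun s : ℝ => Real.exp (-(δ - s) * d i) := by fun_prop
      have hFTC := intervalIntegral.integral_eq_sub_of_hasDerivAt (a := (0:ℝ)) (b := δ)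
        (fun s _ => hF s) (hcont.intervalIntegrable _ _)
      show (∫ s in (0:ℝ)..δ, Real.exp (-(δ - s) * d i)) ≤ 1 / d i
      rw [hFTC]
      have h0exp : Real.exp (-(δ - δ) * d i) = 1 := by norm_num
      rw [h0exp]
      have hpos2 : 0 ≤ Real.exp (-(δ - 0) * d i) / d i := by positivity
      rw [one_div]
      linarith
    rcases le_total (d i) (1 / δ) with hc | hc
    · calc Real.sqrt (d i) * w i ≤ Real.sqrt (1 / δ) * δ :=
            mul_le_mul (Real.sqrt_le_sqrt hc) hw1 hwnn (Real.sqrt_nonneg _)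
        _ = Real.sqrt δ := by
            rw [one_div, Real.sqrt_inv, inv_mul_eq_div, Real.div_sqrt]
    · calc Real.sqrt (d i) * w i ≤ Real.sqrt (d i) * (1 / d i) :=
            mul_le_mul_of_nonneg_left hw2 (Real.sqrt_nonneg _)
        _ = 1 / Real.sqrt (d i) := by
            rw [mul_one_div, Real.sqrt_div_self']
        _ ≤ Real.sqrt δ := by
            have h1' : Real.sqrt (1 / δ) ≤ Real.sqrt (d i) := Real.sqrt_le_sqrt hc
            have h2' : (0:ℝ) < Real.sqrt (1 / δ) := Real.sqrt_pos.mpr (by positivity)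
            calc 1 / Real.sqrt (d i) ≤ 1 / Real.sqrt (1 / δ) :=
                  one_div_le_one_div_of_le h2' h1'
              _ = Real.sqrt δ := by
                  rw [one_div δ, Real.sqrt_inv, one_div, inv_inv]
end

section
/- Let E be a finite-dimensional real normed space, L : E → E a continuous linear map and b ∈ E. If u : ℝ → E is differentiable and satisfies u'(t) = −L u(t) + b for all t, then for every t ∈ ℝ and δ > 0 the exponential Euler step is exact: u(t + δ) = u(t) + δ · φ₁(−δ L) (b − L u(t)). -/
open NormedSpace intervalIntegral in
set_option synthInstance.maxHeartbeats 1000000 in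
/-- The exponential Euler step is exact for the linear ODE `u' = -L u + b` with constant
forcing `b`: `u (t + δ) = u t + δ • φ₁ (-δ L) (b - L (u t))`. -/
theorem exponential_euler_exact
    {E : Type*} [NormedAddCommGroup E] [NormedSpace ℝ E] [FiniteDimensional ℝ E]
    (L : E →L[ℝ] E) (b : E) (u : ℝ → E)
    (hu : ∀ t : ℝ, HasDerivAt u (-(L (u t)) + b) t)
    (t δ : ℝ) (hδ : 0 < δ) :
    u (t + δ) = u t + δ • (phiFun 1 ((-δ) • L)) (b - L (u t)) := by
  let +nondep : NormedAlgebra ℚ (E →L[ℝ] E) := .restrictScalars ℚ ℝ (E →L[ℝ] E)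
  have hc : Continuous fun s : ℝ => NormedSpace.exp (s • L) :=
    NormedSpace.exp_continuous.comp (continuous_id.smul continuous_const)
  -- derivative of s ↦ exp(s•L) (u (t+s))
  have hg : ∀ s : ℝ, HasDerivAt (fun s => (NormedSpace.exp (s • L)) (u (t + s)))
      ((NormedSpace.exp (s • L)) b) s := by
    intro s
    have h0 : HasDerivAt (fun s : ℝ => t + s) 1 s := by
      simpa using (hasDerivAt_id s).const_add t
    have h1 : HasDerivAt (fun s : ℝ => u (t + s)) (-(L (u (t + s))) + b) s := by
      simpa [Function.comp_def] using (hu (t + s)).scomp s h0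
    have h2 := (hasDerivAt_exp_smul_const (𝕂 := ℝ) L s).clm_apply h1
    convert h2 using 1
    simp [ContinuousLinearMap.mul_apply]
  -- FTC for g
  have hbc : Continuous fun s : ℝ => (NormedSpace.exp (s • L)) b :=
    hc.clm_apply continuous_const
  have key : ∫ s in (0:ℝ)..δ, (NormedSpace.exp (s • L)) b =
      (NormedSpace.exp (δ • L)) (u (t + δ)) - u t := by
    have := intervalIntegral.integral_eq_sub_of_hasDerivAt
      (f := fun s => (NormedSpace.exp (s • L)) (u (t + s)))
      (fun s _ => hg s) (hbc.intervalIntegrable 0 δ)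
    simpa using this
  -- inverse relation
  have hinv : NormedSpace.exp ((-δ) • L) * NormedSpace.exp (δ • L) = 1 := by
    rw [← NormedSpace.exp_add_of_commute]
    · simp [neg_smul]
    · rw [neg_smul]; exact (Commute.refl (δ • L)).neg_left
  -- rewrite phiFun applied to the vector
  have hφ : (phiFun 1 ((-δ) • L)) (b - L (u t)) =
      ∫ θ in (0:ℝ)..1, (NormedSpace.exp ((1 - θ) • ((-δ) • L))) (b - L (u t)) := by
    rw [phiFun]
    simp only [if_neg one_ne_zero, Nat.sub_self, Nat.factorial_zero, Nat.cast_one, pow_zero, div_one, one_smul]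
    have hint : IntervalIntegrable
        (fun θ : ℝ => NormedSpace.exp ((1 - θ) • ((-δ) • L)))
        MeasureTheory.volume 0 1 :=
      ((NormedSpace.exp_continuous.comp
        ((continuous_const.sub continuous_id).smul continuous_const)).intervalIntegrable 0 1)
    rw [ContinuousLinearMap.intervalIntegral_apply hint]
  set v := b - L (u t) with hv
  -- change of variables
  have hchg : δ • ∫ θ in (0:ℝ)..1, (NormedSpace.exp ((1 - θ) • ((-δ) • L))) v =
      ∫ s in (0:ℝ)..δ, (NormedSpace.exp ((s - δ) • L)) v := by
    have : ∀ θ : ℝ, (NormedSpace.exp ((1 - θ) • ((-δ) • L))) v =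
        (fun s => (NormedSpace.exp ((s - δ) • L)) v) (δ * θ) := by
      intro θ
      congr 2
      rw [smul_smul]
      ring_nf
    simp_rw [this]
    rw [intervalIntegral.smul_integral_comp_mul_left
      (fun s => (NormedSpace.exp ((s - δ) • L)) v) δ]
    norm_num
  -- split the integral
  have hcont1 : Continuous fun s : ℝ => (NormedSpace.exp ((s - δ) • L)) b :=
    (NormedSpace.exp_continuous.comp
      (((continuous_id.sub continuous_const)).smul continuous_const)).clm_apply continuous_const
  have hcont2 : Continuous fun s : ℝ => (NormedSpace.exp ((s - δ) • L)) (L (u t)) :=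
    (NormedSpace.exp_continuous.comp
      (((continuous_id.sub continuous_const)).smul continuous_const)).clm_apply continuous_const
  have hsplit : ∫ s in (0:ℝ)..δ, (NormedSpace.exp ((s - δ) • L)) v =
      (∫ s in (0:ℝ)..δ, (NormedSpace.exp ((s - δ) • L)) b) -
      ∫ s in (0:ℝ)..δ, (NormedSpace.exp ((s - δ) • L)) (L (u t)) := by
    rw [← intervalIntegral.integral_sub (hcont1.intervalIntegrable 0 δ)
      (hcont2.intervalIntegrable 0 δ)]
    simp [hv]
  -- second integral via FTC
  have hI2 : ∫ s in (0:ℝ)..δ, (NormedSpace.exp ((s - δ) • L)) (L (u t)) =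
      u t - (NormedSpace.exp ((-δ) • L)) (u t) := by
    have hder : ∀ s : ℝ, HasDerivAt (fun s => (NormedSpace.exp ((s - δ) • L)) (u t))
        ((NormedSpace.exp ((s - δ) • L)) (L (u t))) s := by
      intro s
      have hsub : HasDerivAt (fun s : ℝ => s - δ) 1 s := by
        simpa using (hasDerivAt_id s).sub_const δ
      have h0 := hasDerivAt_exp_smul_const (𝕂 := ℝ) L (s - δ)
      have h4 := h0.scomp s hsub
      have h3 := h4.clm_apply (hasDerivAt_const s (u t))
      convert h3 using 1
      simp [ContinuousLinearMap.mul_apply]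
      erw [one_smul, map_zero, add_zero]; rfl
    have := intervalIntegral.integral_eq_sub_of_hasDerivAt
      (f := fun s => (NormedSpace.exp ((s - δ) • L)) (u t))
      (fun s _ => hder s) (hcont2.intervalIntegrable 0 δ)
    rw [this]
    norm_num [neg_smul]
  -- first integral: pull out exp(-δL)
  have hI1 : ∫ s in (0:ℝ)..δ, (NormedSpace.exp ((s - δ) • L)) b =
      (NormedSpace.exp ((-δ) • L)) (∫ s in (0:ℝ)..δ, (NormedSpace.exp (s • L)) b) := by
    have heq : ∀ s : ℝ, (NormedSpace.exp ((s - δ) • L)) b =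
        (NormedSpace.exp ((-δ) • L)) ((NormedSpace.exp (s • L)) b) := by
      intro s
      rw [← ContinuousLinearMap.mul_apply, ← NormedSpace.exp_add_of_commute
        (((Commute.refl L).smul_left _).smul_right _), ← add_smul]
      ring_nf
    simp_rw [heq]
    exact (NormedSpace.exp ((-δ) • L)).intervalIntegral_comp_comm
      (μ := MeasureTheory.volume) (hbc.intervalIntegrable 0 δ)
  -- assemble
  have hinv' : ∀ x : E, (NormedSpace.exp ((-δ) • L)) ((NormedSpace.exp (δ • L)) x) = x := by
    intro x
    rw [← ContinuousLinearMap.mul_apply, hinv, ContinuousLinearMap.one_apply]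
  rw [hφ, hchg, hsplit, hI1, hI2, key, map_sub, hinv']
  abel
end

section
/- (Discrete Gronwall inequality with weakly singular kernel.) For every K ≥ 0 and T > 0 there exists a constant C = C(K, T) > 0 with the following property: for every positive integer N, setting δ = T/N, every a ≥ 0 and every sequence of nonnegative reals (ε_n)_{n=0}^{N} with ε₀ = 0 satisfying ε_n ≤ a + K δ Σ_{j=1}^{n−1} ((n−j)δ)^{−1/2} ε_j for all 1 ≤ n ≤ N, one has ε_n ≤ C a for all 0 ≤ n ≤ N. -/
open Finset

/-- `∑_{k=1}^m 1/√k ≤ 2√m`. -/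
lemma dgs_sqrt_sum (m : ℕ) : ∑ k ∈ Icc 1 m, (Real.sqrt k)⁻¹ ≤ 2 * Real.sqrt m := by
  induction m with
  | zero => simp
  | succ m ih =>
    rw [Finset.sum_Icc_succ_top (by omega)]
    have hs : Real.sqrt m ^ 2 = (m : ℝ) := Real.sq_sqrt (by positivity)
    have ht : Real.sqrt (m + 1) ^ 2 = ((m : ℝ) + 1) := by
      rw [show ((m : ℕ) + 1 : ℝ) = ((m : ℝ) + 1) by push_cast; ring] at *
      exact Real.sq_sqrt (by positivity)
    have hs0 : 0 ≤ Real.sqrt m := Real.sqrt_nonneg _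
    have ht0 : 0 < Real.sqrt (m + 1) := Real.sqrt_pos.2 (by positivity)
    have hcast : ((m + 1 : ℕ) : ℝ) = (m : ℝ) + 1 := by push_cast; ring
    rw [hcast]
    have key : (Real.sqrt ((m : ℝ) + 1))⁻¹ ≤ 2 * Real.sqrt ((m:ℝ) + 1) - 2 * Real.sqrt m := by
      rw [inv_eq_one_div, div_le_iff₀ ht0]
      nlinarith [sq_nonneg (Real.sqrt ((m:ℝ)+1) - Real.sqrt m)]
    linarith

/-- Reflection of a sum over `Icc 1 (m-1)`. -/
lemma dgs_reflect (m : ℕ) (f : ℕ → ℝ) :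
    ∑ k ∈ Icc 1 (m - 1), f (m - k) = ∑ k ∈ Icc 1 (m - 1), f k := by
  apply Finset.sum_nbij' (fun k => m - k) (fun k => m - k)
  · intro a ha; simp only [mem_Icc] at *; omega
  · intro a ha; simp only [mem_Icc] at *; omega
  · intro a ha; simp only [mem_Icc] at *; omega
  · intro a ha; simp only [mem_Icc] at *; omega
  · intro a ha; rfl

/-- Convolution bound: `∑_{k=1}^{m-1} (m-k)^{-1/2} k^{-1/2} ≤ 4`. -/
lemma dgs_conv (m : ℕ) :
    ∑ k ∈ Icc 1 (m - 1), (Real.sqrt ((m - k : ℕ) : ℝ))⁻¹ * (Real.sqrt k)⁻¹ ≤ 4 := by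
  rcases Nat.lt_or_ge m 2 with hm | hm
  · interval_cases m <;> simp
  have hm0 : (0:ℝ) < (m:ℝ) := by positivity
  have hw0 : 0 < Real.sqrt m := Real.sqrt_pos.2 hm0
  -- termwise bound
  have hterm : ∀ k ∈ Icc 1 (m - 1),
      (Real.sqrt ((m - k : ℕ) : ℝ))⁻¹ * (Real.sqrt k)⁻¹ ≤
        (Real.sqrt m)⁻¹ * ((Real.sqrt ((m - k : ℕ) : ℝ))⁻¹ + (Real.sqrt k)⁻¹) := by
    intro k hk
    simp only [mem_Icc] at hk
    set u := Real.sqrt k with hu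
    set v := Real.sqrt ((m - k : ℕ) : ℝ) with hv
    have hu0 : 0 < u := Real.sqrt_pos.2 (by exact_mod_cast Nat.lt_of_lt_of_le Nat.zero_lt_one hk.1)
    have hv0 : 0 < v := Real.sqrt_pos.2 (by
      have : 0 < m - k := by omega
      exact_mod_cast this)
    have hu2 : u ^ 2 = (k : ℝ) := Real.sq_sqrt (by positivity)
    have hv2 : v ^ 2 = ((m - k : ℕ) : ℝ) := Real.sq_sqrt (by positivity)
    have hw2 : Real.sqrt m ^ 2 = (m : ℝ) := Real.sq_sqrt hm0.le
    have hsum : u ^ 2 + v ^ 2 = Real.sqrt m ^ 2 := by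
      rw [hu2, hv2, hw2]
      have : (m - k : ℕ) + k = m := by omega
      have h2 := congrArg (fun x : ℕ => (x:ℝ)) this
      push_cast at h2
      linarith
    have hwle : Real.sqrt m ≤ u + v := by
      nlinarith [mul_pos hu0 hv0, hw0]
    have h1 : v⁻¹ * u⁻¹ = Real.sqrt m / (u * v * Real.sqrt m) := by
      field_simp
    have h2 : (Real.sqrt m)⁻¹ * (v⁻¹ + u⁻¹) = (u + v) / (u * v * Real.sqrt m) := by
      rw [eq_div_iff (by positivity)]
      field_simp
    rw [h1, h2]
    gcongr
  calc ∑ k ∈ Icc 1 (m - 1), (Real.sqrt ((m - k : ℕ) : ℝ))⁻¹ * (Real.sqrt k)⁻¹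
      ≤ ∑ k ∈ Icc 1 (m - 1),
          (Real.sqrt m)⁻¹ * ((Real.sqrt ((m - k : ℕ) : ℝ))⁻¹ + (Real.sqrt k)⁻¹) :=
        Finset.sum_le_sum hterm
    _ = (Real.sqrt m)⁻¹ * ((∑ k ∈ Icc 1 (m - 1), (Real.sqrt ((m - k : ℕ) : ℝ))⁻¹)
          + ∑ k ∈ Icc 1 (m - 1), (Real.sqrt k)⁻¹) := by
        rw [← Finset.sum_add_distrib, Finset.mul_sum]
    _ = (Real.sqrt m)⁻¹ * (2 * ∑ k ∈ Icc 1 (m - 1), (Real.sqrt k)⁻¹) := by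
        rw [dgs_reflect m (fun k => (Real.sqrt (k:ℝ))⁻¹)]; ring
    _ ≤ (Real.sqrt m)⁻¹ * (2 * (2 * Real.sqrt (m - 1 : ℕ))) := by
        gcongr
        exact dgs_sqrt_sum (m - 1)
    _ ≤ (Real.sqrt m)⁻¹ * (2 * (2 * Real.sqrt m)) := by
        gcongr
        exact_mod_cast Nat.sub_le m 1
    _ = 4 := by field_simp; ring

/-- Shifted convolution bound. -/
lemma dgs_conv_shift (n i : ℕ) :
    ∑ j ∈ Icc (i + 1) (n - 1),
        (Real.sqrt ((n - j : ℕ) : ℝ))⁻¹ * (Real.sqrt ((j - i : ℕ) : ℝ))⁻¹ ≤ 4 := by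
  refine le_trans (le_of_eq ?_) (dgs_conv (n - i))
  apply Finset.sum_nbij' (fun j => j - i) (fun k => k + i)
  · intro a ha; simp only [mem_Icc] at *; omega
  · intro a ha; simp only [mem_Icc] at *; omega
  · intro a ha; simp only [mem_Icc] at *; omega
  · intro a ha; simp only [mem_Icc] at *; omega
  · intro j hj
    simp only [mem_Icc] at hj
    have h1 : n - j = (n - i) - (j - i) := by omega
    rw [h1]

/-- `x ^ (-(1/2)) = (√x)⁻¹` for `0 ≤ x`. -/
lemma dgs_rpow (x : ℝ) (hx : 0 ≤ x) : x ^ (-(1/2) : ℝ) = (Real.sqrt x)⁻¹ := by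
  rw [Real.rpow_neg hx, ← Real.sqrt_eq_rpow]


/-- Discrete Gronwall inequality with weakly singular kernel: for every `K ≥ 0` and `T > 0`
there is a constant `C > 0`, depending only on `K` and `T`, such that for every `N ≥ 1`,
with `δ = T / N`, every `a ≥ 0` and every sequence of nonnegative reals `ε` with `ε 0 = 0`
satisfying `ε n ≤ a + K δ ∑_{j=1}^{n-1} ((n - j) δ)^{-1/2} ε j` for `1 ≤ n ≤ N`, one has
`ε n ≤ C a` for all `0 ≤ n ≤ N`. -/
theorem discrete_gronwall_singular (K T : ℝ) (hK : 0 ≤ K) (hT : 0 < T) :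
    ∃ C : ℝ, 0 < C ∧
      ∀ N : ℕ, 0 < N →
        ∀ a : ℝ, 0 ≤ a →
          ∀ ε : ℕ → ℝ, (∀ n ≤ N, 0 ≤ ε n) → ε 0 = 0 →
            (∀ n, 1 ≤ n → n ≤ N →
              ε n ≤ a + K * (T / N) *
                ∑ j ∈ Finset.Icc 1 (n - 1),
                  (((n : ℝ) - (j : ℝ)) * (T / N)) ^ (-(1/2) : ℝ) * ε j) →
            ∀ n ≤ N, ε n ≤ C * a := by
  refine ⟨(1 + 2 * K * Real.sqrt T) * Real.exp (4 * K ^ 2 * T), by positivity, ?_⟩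
  intro N hN a ha ε hε h0 hrec
  set δ : ℝ := T / N with hδdef
  have hNR : (0 : ℝ) < N := by exact_mod_cast hN
  have hδ : 0 < δ := div_pos hT hNR
  have hsδ : 0 < Real.sqrt δ := Real.sqrt_pos.2 hδ
  have hsδ2 : Real.sqrt δ ^ 2 = δ := Real.sq_sqrt hδ.le
  set w : ℕ → ℕ → ℝ := fun n j => (Real.sqrt ((n - j : ℕ) : ℝ))⁻¹ with hw
  have hw0 : ∀ n j, 0 ≤ w n j := fun n j => by positivity
  -- rewrite of the recursion
  have hrec' : ∀ n, 1 ≤ n → n ≤ N →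
      ε n ≤ a + K * Real.sqrt δ * ∑ j ∈ Icc 1 (n - 1), w n j * ε j := by
    intro n h1 h2
    refine (hrec n h1 h2).trans (le_of_eq ?_)
    have : ∀ j ∈ Icc 1 (n - 1),
        (((n : ℝ) - (j : ℝ)) * δ) ^ (-(1/2) : ℝ) * ε j
          = (Real.sqrt δ)⁻¹ * (w n j * ε j) := by
      intro j hj
      simp only [mem_Icc] at hj
      have hcast : ((n : ℝ) - (j : ℝ)) = ((n - j : ℕ) : ℝ) := by
        have : (j : ℝ) ≤ n := by exact_mod_cast (by omega : j ≤ n)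
        rw [Nat.cast_sub (by omega : j ≤ n)]
      have hpos : (0 : ℝ) ≤ ((n - j : ℕ) : ℝ) := by positivity
      rw [hcast, dgs_rpow _ (by positivity),
        Real.sqrt_mul hpos, mul_inv, hw]
      ring
    rw [Finset.sum_congr rfl this, ← Finset.mul_sum]
    have hKδ : K * δ * (Real.sqrt δ)⁻¹ = K * Real.sqrt δ := by
      have hms : Real.sqrt δ * Real.sqrt δ = δ := Real.mul_self_sqrt hδ.le
      have : K * δ * (Real.sqrt δ)⁻¹ = K * (Real.sqrt δ * Real.sqrt δ) * (Real.sqrt δ)⁻¹ := by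
        rw [hms]
      rw [this]
      field_simp
    rw [← mul_assoc, hKδ]
  -- first order sum bound
  have hS1 : ∀ n, n ≤ N → Real.sqrt δ * ∑ j ∈ Icc 1 (n - 1), w n j ≤ 2 * Real.sqrt T := by
    intro n hn
    have e1 : ∑ j ∈ Icc 1 (n - 1), w n j = ∑ k ∈ Icc 1 (n - 1), (Real.sqrt (k : ℝ))⁻¹ :=
      dgs_reflect n (fun k => (Real.sqrt (k : ℝ))⁻¹)
    rw [e1]
    calc Real.sqrt δ * ∑ k ∈ Icc 1 (n - 1), (Real.sqrt (k : ℝ))⁻¹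
        ≤ Real.sqrt δ * (2 * Real.sqrt ((n - 1 : ℕ) : ℝ)) := by
          gcongr; exact dgs_sqrt_sum (n - 1)
      _ = 2 * (Real.sqrt δ * Real.sqrt ((n - 1 : ℕ) : ℝ)) := by ring
      _ = 2 * Real.sqrt (δ * ((n - 1 : ℕ) : ℝ)) := by rw [Real.sqrt_mul hδ.le]
      _ ≤ 2 * Real.sqrt T := by
          have hle : δ * ((n - 1 : ℕ) : ℝ) ≤ T := by
            calc δ * ((n - 1 : ℕ) : ℝ) ≤ δ * N := by
                  gcongr; exact_mod_cast (by omega : n - 1 ≤ N)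
              _ = T := by rw [hδdef]; field_simp
          have := Real.sqrt_le_sqrt hle
          linarith
  -- the iterated (regular kernel) inequality
  set c : ℝ := 4 * K ^ 2 * δ with hc
  have hc0 : 0 ≤ c := by positivity
  set A : ℝ := a * (1 + 2 * K * Real.sqrt T) with hA
  have hA0 : 0 ≤ A := by positivity
  have haA : a ≤ A := by
    nlinarith [mul_nonneg ha (mul_nonneg (mul_nonneg (by norm_num : (0:ℝ) ≤ 2) hK) (Real.sqrt_nonneg T))]
  have key : ∀ n, 1 ≤ n → n ≤ N → ε n ≤ A + c * ∑ i ∈ Icc 1 (n - 2), ε i := by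
    intro n h1 h2
    have step1 : ∑ j ∈ Icc 1 (n - 1), w n j * ε j
        ≤ ∑ j ∈ Icc 1 (n - 1), w n j * (a + K * Real.sqrt δ * ∑ i ∈ Icc 1 (j - 1), w j i * ε i) := by
      apply Finset.sum_le_sum
      intro j hj
      simp only [mem_Icc] at hj
      exact mul_le_mul_of_nonneg_left (hrec' j hj.1 (by omega)) (hw0 n j)
    have step2 : ∑ j ∈ Icc 1 (n - 1), w n j * (a + K * Real.sqrt δ * ∑ i ∈ Icc 1 (j - 1), w j i * ε i)
        = a * (∑ j ∈ Icc 1 (n - 1), w n j)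
          + K * Real.sqrt δ * ∑ j ∈ Icc 1 (n - 1), ∑ i ∈ Icc 1 (j - 1), w n j * (w j i * ε i) := by
      rw [Finset.mul_sum, Finset.mul_sum, ← Finset.sum_add_distrib]
      apply Finset.sum_congr rfl
      intro j hj
      rw [Finset.mul_sum, Finset.mul_sum]
      ring_nf
      rw [Finset.mul_sum]
      ring_nf
    have swap : ∑ j ∈ Icc 1 (n - 1), ∑ i ∈ Icc 1 (j - 1), w n j * (w j i * ε i)
        = ∑ i ∈ Icc 1 (n - 2), ∑ j ∈ Icc (i + 1) (n - 1), w n j * (w j i * ε i) := by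
      apply Finset.sum_comm'
      intro j i
      simp only [mem_Icc]
      omega
    have inner : ∀ i ∈ Icc 1 (n - 2),
        ∑ j ∈ Icc (i + 1) (n - 1), w n j * (w j i * ε i) ≤ 4 * ε i := by
      intro i hi
      simp only [mem_Icc] at hi
      have hεi : 0 ≤ ε i := hε i (by omega)
      calc ∑ j ∈ Icc (i + 1) (n - 1), w n j * (w j i * ε i)
          = (∑ j ∈ Icc (i + 1) (n - 1), w n j * w j i) * ε i := by
            rw [Finset.sum_mul]; apply Finset.sum_congr rfl; intro j hj; ring
        _ ≤ 4 * ε i := by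
            gcongr
            exact dgs_conv_shift n i
    have step3 : ∑ i ∈ Icc 1 (n - 2), ∑ j ∈ Icc (i + 1) (n - 1), w n j * (w j i * ε i)
        ≤ 4 * ∑ i ∈ Icc 1 (n - 2), ε i := by
      rw [Finset.mul_sum]
      exact Finset.sum_le_sum inner
    have hd : 0 ≤ ∑ i ∈ Icc 1 (n - 2), ε i := by
      apply Finset.sum_nonneg
      intro i hi
      simp only [mem_Icc] at hi
      exact hε i (by omega)
    calc ε n ≤ a + K * Real.sqrt δ * ∑ j ∈ Icc 1 (n - 1), w n j * ε j := hrec' n h1 h2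
      _ ≤ a + K * Real.sqrt δ *
            (a * (∑ j ∈ Icc 1 (n - 1), w n j)
              + K * Real.sqrt δ * (4 * ∑ i ∈ Icc 1 (n - 2), ε i)) := by
          have := step1.trans (le_of_eq step2)
          have h2' : ∑ j ∈ Icc 1 (n - 1), ∑ i ∈ Icc 1 (j - 1), w n j * (w j i * ε i)
              ≤ 4 * ∑ i ∈ Icc 1 (n - 2), ε i := swap ▸ step3
          nlinarith [mul_nonneg hK hsδ.le, mul_le_mul_of_nonneg_left h2' (mul_nonneg hK hsδ.le)]
      _ = a + K * a * (Real.sqrt δ * ∑ j ∈ Icc 1 (n - 1), w n j)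
            + (K * Real.sqrt δ) ^ 2 * (4 * ∑ i ∈ Icc 1 (n - 2), ε i) := by ring
      _ ≤ a + K * a * (2 * Real.sqrt T) + K ^ 2 * δ * (4 * ∑ i ∈ Icc 1 (n - 2), ε i) := by
          have h1' := hS1 n h2
          have : (K * Real.sqrt δ) ^ 2 = K ^ 2 * δ := by rw [mul_pow, hsδ2]
          rw [this]
          have := mul_le_mul_of_nonneg_left h1' (mul_nonneg hK ha)
          nlinarith [mul_nonneg hK ha]
      _ = A + c * ∑ i ∈ Icc 1 (n - 2), ε i := by rw [hA, hc]; ring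
  -- discrete Gronwall
  have gron : ∀ n, n ≤ N → ε n ≤ A * (1 + c) ^ n := by
    intro n
    induction n using Nat.strong_induction_on with
    | _ n ih =>
      intro hn
      rcases Nat.eq_zero_or_pos n with h | h
      · subst h
        rw [h0, pow_zero, mul_one]
        exact hA0
      · have hsum : ∑ i ∈ Icc 1 (n - 2), ε i ≤ ∑ i ∈ range (n - 1), A * (1 + c) ^ i := by
          calc ∑ i ∈ Icc 1 (n - 2), ε i ≤ ∑ i ∈ Icc 1 (n - 2), A * (1 + c) ^ i := by
                apply Finset.sum_le_sum
                intro i hi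
                simp only [mem_Icc] at hi
                exact ih i (by omega) (by omega)
            _ ≤ ∑ i ∈ range (n - 1), A * (1 + c) ^ i := by
                apply Finset.sum_le_sum_of_subset_of_nonneg
                · intro i hi
                  simp only [mem_Icc, mem_range] at *
                  omega
                · intro i _ _
                  positivity
        have geo : c * ∑ i ∈ range (n - 1), A * (1 + c) ^ i = A * ((1 + c) ^ (n - 1) - 1) := by
          rw [← Finset.mul_sum]
          have := geom_sum_mul (1 + c) (n - 1)
          have h' : (1 + c - 1) = c := by ring
          calc c * (A * ∑ i ∈ range (n - 1), (1 + c) ^ i)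
              = A * ((∑ i ∈ range (n - 1), (1 + c) ^ i) * (1 + c - 1)) := by ring
            _ = A * ((1 + c) ^ (n - 1) - 1) := by rw [this]
        calc ε n ≤ A + c * ∑ i ∈ Icc 1 (n - 2), ε i := key n h hn
          _ ≤ A + c * ∑ i ∈ range (n - 1), A * (1 + c) ^ i := by
              have := mul_le_mul_of_nonneg_left hsum hc0
              linarith
          _ = A + A * ((1 + c) ^ (n - 1) - 1) := by rw [geo]
          _ = A * (1 + c) ^ (n - 1) := by ring
          _ ≤ A * (1 + c) ^ n := by
              apply mul_le_mul_of_nonneg_left _ hA0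
              exact pow_le_pow_right₀ (by linarith) (by omega)
  -- conclude
  intro n hn
  have hcN : c * N = 4 * K ^ 2 * T := by
    rw [hc, hδdef]; field_simp
  calc ε n ≤ A * (1 + c) ^ n := gron n hn
    _ ≤ A * (1 + c) ^ N := by
        apply mul_le_mul_of_nonneg_left _ hA0
        exact pow_le_pow_right₀ (by linarith) hn
    _ ≤ A * Real.exp c ^ N := by
        apply mul_le_mul_of_nonneg_left _ hA0
        apply pow_le_pow_left₀ (by linarith)
        linarith [Real.add_one_le_exp c]
    _ = A * Real.exp (4 * K ^ 2 * T) := by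
        rw [← Real.exp_nat_mul, mul_comm (N : ℝ) c, hcN]
    _ = (1 + 2 * K * Real.sqrt T) * Real.exp (4 * K ^ 2 * T) * a := by rw [hA]; ring
end

section
/- Let E be a finite-dimensional real inner product space, A : E → E a self-adjoint positive semidefinite continuous linear map, T > 0, g : [0, T] → E continuous, and θ : [0, T] → E continuously differentiable with θ'(t) + A θ(t) = g(t) for all t ∈ [0, T]. Then for every t ∈ [0, T], ⟪A θ(t), θ(t)⟫ + ∫_0^t ‖θ'(s)‖² ds ≤ ⟪A θ(0), θ(0)⟫ + ∫_0^t ‖g(s)‖² ds. -/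
open scoped RealInnerProductSpace

/-- Energy estimate for the linear parabolic evolution `θ' + A θ = g`: for a self-adjoint
positive semidefinite operator `A` on a finite-dimensional real inner product space, a
continuous forcing `g` and a `C¹` solution `θ` on `[0, T]`, one has for all `t ∈ [0, T]`
`⟪A θ(t), θ(t)⟫ + ∫_0^t ‖θ'(s)‖² ds ≤ ⟪A θ(0), θ(0)⟫ + ∫_0^t ‖g(s)‖² ds`. -/
theorem parabolic_energy_estimate
    {E : Type*} [NormedAddCommGroup E] [InnerProductSpace ℝ E] [FiniteDimensional ℝ E]
    (A : E →L[ℝ] E) (hsym : ∀ x y : E, ⟪A x, y⟫ = ⟪x, A y⟫)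
    (hpsd : ∀ x : E, 0 ≤ ⟪A x, x⟫)
    (T : ℝ) (hT : 0 < T)
    (g : ℝ → E) (hg : ContinuousOn g (Set.Icc 0 T))
    (θ θ' : ℝ → E)
    (hθ : ∀ t ∈ Set.Icc (0:ℝ) T, HasDerivAt θ (θ' t) t)
    (hθ' : ContinuousOn θ' (Set.Icc 0 T))
    (hode : ∀ t ∈ Set.Icc (0:ℝ) T, θ' t + A (θ t) = g t) :
    ∀ t ∈ Set.Icc (0:ℝ) T,
      ⟪A (θ t), θ t⟫ + ∫ s in (0:ℝ)..t, ‖θ' s‖ ^ 2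
        ≤ ⟪A (θ 0), θ 0⟫ + ∫ s in (0:ℝ)..t, ‖g s‖ ^ 2 := by
  intro t ht
  obtain ⟨ht0, htT⟩ := ht
  have hsub : Set.Icc (0:ℝ) t ⊆ Set.Icc 0 T :=
    Set.Icc_subset_Icc le_rfl htT
  have hθcont : ContinuousOn θ (Set.Icc 0 T) := fun s hs =>
    (hθ s hs).continuousAt.continuousWithinAt
  -- derivative of the energy
  have hderiv : ∀ s ∈ Set.Icc (0:ℝ) t,
      HasDerivAt (fun u => ⟪A (θ u), θ u⟫) (2 * ⟪A (θ s), θ' s⟫) s := by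
    intro s hs
    have hs' := hsub hs
    have h1 : HasDerivAt (fun u => A (θ u)) (A (θ' s)) s :=
      (A.hasFDerivAt.comp_hasDerivAt s (hθ s hs'))
    have := (h1.inner ℝ (hθ s hs'))
    convert this using 1
    · rfl
    · rfl
    have : ⟪A (θ' s), θ s⟫ = ⟪A (θ s), θ' s⟫ := by
      rw [hsym]; exact real_inner_comm _ _
    ring_nf
    rw [real_inner_comm (θ' s) (A (θ s))] at *
    linarith [this]
  -- continuity facts on [0,t]
  have hθct : ContinuousOn θ (Set.Icc 0 t) := hθcont.mono hsub
  have hθ't : ContinuousOn θ' (Set.Icc 0 t) := hθ'.mono hsub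
  have hgt : ContinuousOn g (Set.Icc 0 t) := hg.mono hsub
  have hcont2 : ContinuousOn (fun s => 2 * ⟪A (θ s), θ' s⟫ + ‖θ' s‖ ^ 2) (Set.Icc 0 t) := by
    apply ContinuousOn.add
    · exact (continuousOn_const.mul ((A.continuous.comp_continuousOn hθct).inner hθ't))
    · exact (hθ't.norm.pow 2)
  have hint2 : IntervalIntegrable (fun s => 2 * ⟪A (θ s), θ' s⟫ + ‖θ' s‖ ^ 2)
      MeasureTheory.volume 0 t := by
    apply ContinuousOn.intervalIntegrable
    rwa [Set.uIcc_of_le ht0]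
  have hintg : IntervalIntegrable (fun s => ‖g s‖ ^ 2) MeasureTheory.volume 0 t := by
    apply ContinuousOn.intervalIntegrable
    rw [Set.uIcc_of_le ht0]
    exact hgt.norm.pow 2
  have hintθ' : IntervalIntegrable (fun s => ‖θ' s‖ ^ 2) MeasureTheory.volume 0 t := by
    apply ContinuousOn.intervalIntegrable
    rw [Set.uIcc_of_le ht0]
    exact hθ't.norm.pow 2
  have hintAθ : IntervalIntegrable (fun s => 2 * ⟪A (θ s), θ' s⟫) MeasureTheory.volume 0 t := by
    apply ContinuousOn.intervalIntegrable
    rw [Set.uIcc_of_le ht0]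
    exact continuousOn_const.mul ((A.continuous.comp_continuousOn hθct).inner hθ't)
  -- FTC
  have hftc : ∫ s in (0:ℝ)..t, 2 * ⟪A (θ s), θ' s⟫
      = ⟪A (θ t), θ t⟫ - ⟪A (θ 0), θ 0⟫ := by
    apply intervalIntegral.integral_eq_sub_of_hasDerivAt
    · intro s hs
      rw [Set.uIcc_of_le ht0] at hs
      exact hderiv s hs
    · exact hintAθ
  -- pointwise bound
  have hpt : ∀ s ∈ Set.Icc (0:ℝ) t,
      2 * ⟪A (θ s), θ' s⟫ + ‖θ' s‖ ^ 2 ≤ ‖g s‖ ^ 2 := by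
    intro s hs
    have hs' := hsub hs
    have hgs : g s = θ' s + A (θ s) := (hode s hs').symm
    have hexp : ‖g s‖ ^ 2 = ‖θ' s‖ ^ 2 + 2 * ⟪θ' s, A (θ s)⟫ + ‖A (θ s)‖ ^ 2 := by
      rw [hgs]; exact norm_add_sq_real _ _
    have hcm : ⟪θ' s, A (θ s)⟫ = ⟪A (θ s), θ' s⟫ := real_inner_comm _ _
    nlinarith [sq_nonneg ‖A (θ s)‖]
  have hmono : ∫ s in (0:ℝ)..t, (2 * ⟪A (θ s), θ' s⟫ + ‖θ' s‖ ^ 2)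
      ≤ ∫ s in (0:ℝ)..t, ‖g s‖ ^ 2 :=
    intervalIntegral.integral_mono_on ht0 hint2 hintg hpt
  rw [intervalIntegral.integral_add hintAθ hintθ', hftc] at hmono
  linarith
end
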